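/- arXiv:1905.11769 — 5 statements merged into one kernel-verified Lean document; each statement's English description precedes it below -/
import Mathlib

section
/- Let X = [x^1,…,x^n] ∈ ℝ^{d×n} be a feature matrix and let 𝓕 = {F_1,…,F_K} be a K-partition of [d] with d_k := |F_k|. For each k let P_k ∈ ℝ^{d_k×n} be the submatrix of rows of X indexed by F_k, let μ^k ∈ ℝ^n be arbitrary (cluster centroid) vectors, and define the Euclidean clustering error err_k := ‖P_k − 1_{d_k}(μ^k)^⊤‖_F. Let each data point i have a label y^i, and let ℓ be a loss function such that for every label y, the map t ↦ ℓ(t; y) is L-Lipschitz on ℝ. Then for every linear model w ∈ ℝ^d there exists a model w̃ ∈ ℝ^K such that for all subsets S ⊆ [n]: sqrt( Σ_{i∈S} ( ℓ(w^⊤x^i; y^i) − ℓ(w̃^⊤x̃^i; y^i) )² ) ≤ L · Σ_{k=1}^K ‖w_{F_k}^⊥‖_2 · err_k. -/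
open Finset
open Function
open scoped BigOperators

/-!
Take `wt k` to be the mean of `w` over `F k`. Since `w_{F_k} - wt k` sums to zero, the residual
`w ⬝ x^i - wt ⬝ x̃^i` equals `∑ k, ∑ j ∈ F k, (w j - wt k) * (X j i - μ k i)` for any centroids `μ`.
Lipschitz continuity of the loss, the triangle inequality in `ℓ²(S)` over the clusters, and
Cauchy–Schwarz within each cluster then give the bound.
-/

theorem Finset.sum_univ_eq_sum_sum_of_pairwise_disjoint {ι κ M : Type*} [Fintype ι] [Fintype κ]
    [DecidableEq ι] [AddCommMonoid M] {F : κ → Finset ι}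
    (hdisj : Pairwise (Disjoint on F)) (hcover : ∀ j, ∃ k, j ∈ F k) (g : ι → M) :
    ∑ j, g j = ∑ k, ∑ j ∈ F k, g j := by
  have hunion : univ.biUnion F = univ :=
    eq_univ_of_forall fun j => mem_biUnion.2 <| (hcover j).imp fun k hk => ⟨mem_univ k, hk⟩
  rw [← sum_biUnion fun k _ l _ hkl => hdisj hkl, hunion]

theorem Finset.sum_mul_sub_expect_mul_sum {ι K : Type*} [Field K] [CharZero K] (s : Finset ι)
    (w x : ι → K) (c : K) :
    ∑ j ∈ s, w j * x j - (𝔼 j ∈ s, w j) * ∑ j ∈ s, x j =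
      ∑ j ∈ s, (w j - 𝔼 j ∈ s, w j) * (x j - c) := by
  have hcentered : ∑ j ∈ s, (w j - 𝔼 j ∈ s, w j) = 0 := by
    rw [sum_sub_distrib, sum_const, nsmul_eq_mul, card_mul_expect, sub_self]
  have hsplit : ∑ j ∈ s, (w j - 𝔼 j ∈ s, w j) * (x j - c) =
      ∑ j ∈ s, (w j - 𝔼 j ∈ s, w j) * x j - (∑ j ∈ s, (w j - 𝔼 j ∈ s, w j)) * c := by
    rw [sum_mul, ← sum_sub_distrib]
    simp only [mul_sub]
  rw [hsplit, hcentered, zero_mul, sub_zero, mul_sum, ← sum_sub_distrib]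
  simp only [sub_mul]

section SquareSums

variable {ι κ : Type*}

theorem Real.sqrt_sum_sq_sum_le (s : Finset ι) (t : Finset κ) (g : κ → ι → ℝ) :
    √(∑ i ∈ s, (∑ k ∈ t, g k i) ^ 2) ≤ ∑ k ∈ t, √(∑ i ∈ s, g k i ^ 2) := by
  have hnorm (v : ι → ℝ) :
      ‖(WithLp.toLp 2 fun i : s => v i : EuclideanSpace ℝ s)‖ = √(∑ i ∈ s, v i ^ 2) := by
    simp [EuclideanSpace.norm_eq, sum_attach s fun i => v i ^ 2]
  calc √(∑ i ∈ s, (∑ k ∈ t, g k i) ^ 2)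
      = ‖∑ k ∈ t, (WithLp.toLp 2 fun i : s => g k i : EuclideanSpace ℝ s)‖ := by
        rw [← hnorm, ← WithLp.toLp_sum, sum_fn]
    _ ≤ ∑ k ∈ t, ‖(WithLp.toLp 2 fun i : s => g k i : EuclideanSpace ℝ s)‖ := norm_sum_le _ _
    _ = ∑ k ∈ t, √(∑ i ∈ s, g k i ^ 2) := by simp only [hnorm]

theorem Real.sqrt_sum_sq_sum_mul_le (s : Finset ι) (t : Finset κ) (a : ι → ℝ) (b : ι → κ → ℝ) :
    √(∑ i ∈ t, (∑ j ∈ s, a j * b j i) ^ 2) ≤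
      √(∑ j ∈ s, a j ^ 2) * √(∑ j ∈ s, ∑ i ∈ t, b j i ^ 2) := by
  rw [← Real.sqrt_mul (sum_nonneg fun j _ => sq_nonneg _), sum_comm (s := s), mul_sum]
  gcongr with i
  exact sum_mul_sq_le_sq_mul_sq s a (b · i)

theorem Real.sqrt_sum_sq_le_mul_sqrt_sum_sq {L : ℝ} (hL : 0 ≤ L) {S : Finset ι} {p q : ι → ℝ}
    (h : ∀ i ∈ S, |p i| ≤ L * |q i|) :
    √(∑ i ∈ S, p i ^ 2) ≤ L * √(∑ i ∈ S, q i ^ 2) := by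
  rw [← Real.sqrt_sq hL, ← Real.sqrt_mul (sq_nonneg L), mul_sum]
  gcongr with i hi
  rw [← sq_abs (p i), ← sq_abs (q i), ← mul_pow]
  exact pow_le_pow_left₀ (abs_nonneg _) (h i hi) 2

end SquareSums

/-- Theorem: DEFRAG-X preserves linear models.
`X = [x^1,…,x^n] ∈ ℝ^{d×n}`, `𝓕 = {F_1,…,F_K}` a `K`-partition of `[d]`,
`P_k` the rows of `X` indexed by `F_k`, centroids `μ^k ∈ ℝ^n`, and Euclidean
clustering error `err_k = ‖P_k - 1_{d_k}(μ^k)^⊤‖_F`.  For a loss `ℓ` that is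
`L`-Lipschitz in its first argument, for every `w ∈ ℝ^d` there is `wt ∈ ℝ^K`
such that for every `S ⊆ [n]`:
`sqrt(∑_{i∈S} (ℓ(w^⊤x^i;y^i) - ℓ(wt^⊤x̃^i;y^i))²) ≤ L·∑_k ‖w_{F_k}^⊥‖₂·err_k`. -/
theorem stmt_1 {d n K : ℕ} {α : Type*}
    (X : Matrix (Fin d) (Fin n) ℝ)
    (F : Fin K → Finset (Fin d))
    (hdisj : ∀ k l : Fin K, k ≠ l → Disjoint (F k) (F l))
    (hcover : ∀ j : Fin d, ∃ k : Fin K, j ∈ F k)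
    (μ : Fin K → Fin n → ℝ)
    (y : Fin n → α)
    (f : ℝ → α → ℝ) (L : ℝ)
    (hLip : ∀ (a : α) (s t : ℝ), |f s a - f t a| ≤ L * |s - t|)
    (w : Fin d → ℝ) :
    ∃ wt : Fin K → ℝ, ∀ S : Finset (Fin n),
      Real.sqrt (∑ i ∈ S,
          (f (∑ j : Fin d, w j * X j i) (y i) -
            f (∑ k : Fin K, wt k * ∑ j ∈ F k, X j i) (y i)) ^ 2) ≤
        L * ∑ k : Fin K,
          Real.sqrt (∑ j ∈ F k, (w j - (∑ j' ∈ F k, w j') / ((F k).card : ℝ)) ^ 2) *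
            Real.sqrt (∑ j ∈ F k, ∑ i : Fin n, (X j i - μ k i) ^ 2) := by
  refine ⟨fun k => 𝔼 j ∈ F k, w j, fun S => ?_⟩
  -- `hLip` forces `0 ≤ L` only when some label exists, so `n = 0` is split off first.
  rcases isEmpty_or_nonempty (Fin n) with hn | hn
  · simp [eq_empty_of_isEmpty S]
  obtain ⟨i₀⟩ := hn
  have hL : 0 ≤ L := by simpa using (abs_nonneg _).trans (hLip (y i₀) 1 0)
  have hresidual (i : Fin n) :
      ∑ j, w j * X j i - ∑ k, (𝔼 j ∈ F k, w j) * ∑ j ∈ F k, X j i =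
        ∑ k, ∑ j ∈ F k, (w j - 𝔼 j' ∈ F k, w j') * (X j i - μ k i) := by
    rw [sum_univ_eq_sum_sum_of_pairwise_disjoint (fun k l hkl => hdisj k l hkl) hcover,
      ← sum_sub_distrib]
    exact sum_congr rfl fun k _ => sum_mul_sub_expect_mul_sum _ _ _ _
  simp_rw [← expect_eq_sum_div_card]
  calc _ ≤ L * √(∑ i ∈ S, (∑ k, ∑ j ∈ F k, (w j - 𝔼 j' ∈ F k, w j') * (X j i - μ k i)) ^ 2) :=
        Real.sqrt_sum_sq_le_mul_sqrt_sum_sq hL fun i _ => (hresidual i ▸ hLip (y i) _ _)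
    _ ≤ L * ∑ k, √(∑ i ∈ S, (∑ j ∈ F k, (w j - 𝔼 j' ∈ F k, w j') * (X j i - μ k i)) ^ 2) := by
        gcongr
        exact Real.sqrt_sum_sq_sum_le _ _ _
    _ ≤ L * ∑ k, √(∑ i, (∑ j ∈ F k, (w j - 𝔼 j' ∈ F k, w j') * (X j i - μ k i)) ^ 2) := by
        gcongr
        exact subset_univ S
    _ ≤ _ := by
        gcongr
        exact Real.sqrt_sum_sq_sum_mul_le _ _ _ _
end

section
/- Let v^1,…,v^m ∈ ℝ_+^p be vectors with nonnegative coordinates, each with at least one strictly positive coordinate. For each i let I(v^i) := ( DCG(rank(v^i), v^i) )^{-1} = ( max_{r} DCG(r, v^i) )^{-1} > 0, and define nDCG(r, v^i) := I(v^i)·DCG(r, v^i). Then for every permutation r of [p]: Σ_{i=1}^m nDCG(r, v^i) = Σ_{j=1}^p (1/log(1+j)) · ( Σ_{i=1}^m I(v^i)·v^i )_{r_j}, and consequently the permutation r* := rank( Σ_{i=1}^m I(v^i)·v^i ) satisfies Σ_{i=1}^m nDCG(r, v^i) ≤ Σ_{i=1}^m nDCG(r*, v^i) for all permutations r. -/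
/-!
Exchanging the two sums shows that `∑ᵢ nDCG(r, vⁱ)` is the DCG of `r` for the single aggregate
vector `w = ∑ᵢ I(vⁱ) vⁱ`. The discounts `1 / log (j + 2)` decrease in `j`, so by the rearrangement
inequality the DCG of `w` is maximised by any permutation listing `w` in decreasing order.
-/

open Finset

-- Positions are 0-indexed, so position `j` is discounted by `log (j + 2)`.
noncomputable def dcg {p : ℕ} (r : Equiv.Perm (Fin p)) (v : Fin p → ℝ) : ℝ :=
  ∑ j : Fin p, v (r j) / Real.log (((j : ℕ) : ℝ) + 2)

lemma log_natCast_add_two_pos (n : ℕ) : 0 < Real.log ((n : ℝ) + 2) :=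
  Real.log_pos (by linarith [(Nat.cast_nonneg n : (0 : ℝ) ≤ n)])

lemma antitone_one_div_log_natCast_add_two :
    Antitone fun n : ℕ => 1 / Real.log ((n : ℝ) + 2) := by
  intro a b hab
  apply one_div_le_one_div_of_le (log_natCast_add_two_pos a)
  exact Real.log_le_log (by positivity) (by gcongr)

lemma sum_mul_comp_perm_le_of_antitone {ι : Type*} [LinearOrder ι] [Fintype ι] {d w : ι → ℝ}
    {σ : Equiv.Perm ι} (hd : Antitone d) (hσ : Antitone (w ∘ σ)) (r : Equiv.Perm ι) :
    ∑ j, d j * w (r j) ≤ ∑ j, d j * w (σ j) := by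
  simpa only [Function.comp_apply, Equiv.Perm.mul_apply, Equiv.Perm.inv_def,
    Equiv.apply_symm_apply] using (hd.monovary hσ).sum_mul_comp_perm_le_sum_mul (σ := σ⁻¹ * r)

lemma dcg_eq_sum_mul {p : ℕ} (r : Equiv.Perm (Fin p)) (v : Fin p → ℝ) :
    dcg r v = ∑ j : Fin p, 1 / Real.log (((j : ℕ) : ℝ) + 2) * v (r j) := by
  simp only [dcg, one_div_mul_eq_div]

lemma sum_mul_dcg {m p : ℕ} (c : Fin m → ℝ) (r : Equiv.Perm (Fin p)) (v : Fin m → Fin p → ℝ) :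
    ∑ i, c i * dcg r (v i) = dcg r fun k => ∑ i, c i * v i k := by
  simp only [dcg_eq_sum_mul, mul_sum]
  rw [sum_comm]
  exact sum_congr rfl fun _ _ => sum_congr rfl fun _ _ => by ring

lemma dcg_pos {p : ℕ} {v : Fin p → ℝ} (hv : ∀ j, 0 ≤ v j) (hpos : ∃ j, 0 < v j)
    (r : Equiv.Perm (Fin p)) : 0 < dcg r v := by
  obtain ⟨k, hk⟩ := hpos
  refine sum_pos' (fun j _ => div_nonneg (hv _) (log_natCast_add_two_pos _).le)
    ⟨r⁻¹ k, mem_univ _, div_pos ?_ (log_natCast_add_two_pos _)⟩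
  simpa using hk

lemma dcg_le_dcg_of_antitone {p : ℕ} {w : Fin p → ℝ} {σ : Equiv.Perm (Fin p)}
    (hσ : Antitone (w ∘ σ)) (r : Equiv.Perm (Fin p)) : dcg r w ≤ dcg σ w := by
  simp only [dcg_eq_sum_mul]
  exact sum_mul_comp_perm_le_of_antitone
    (antitone_one_div_log_natCast_add_two.comp_monotone Fin.val_strictMono.monotone) hσ r

theorem stmt_9_general {m p : ℕ} (v : Fin m → Fin p → ℝ)
    (hv : ∀ i j, 0 ≤ v i j) (hposc : ∀ i : Fin m, ∃ j : Fin p, 0 < v i j)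
    (rk : Fin m → Equiv.Perm (Fin p))
    (I : Fin m → ℝ)
    (hI : ∀ i : Fin m,
      I i = (∑ j : Fin p, v i (rk i j) / Real.log (((j : ℕ) : ℝ) + 2))⁻¹)
    (rstar : Equiv.Perm (Fin p))
    (hrstar : ∀ a b : Fin p, a ≤ b →
      (∑ i : Fin m, I i * v i (rstar b)) ≤ ∑ i : Fin m, I i * v i (rstar a)) :
    (∀ i : Fin m, 0 < I i) ∧
    (∀ r : Equiv.Perm (Fin p),
        ∑ i : Fin m, I i * ∑ j : Fin p, v i (r j) / Real.log (((j : ℕ) : ℝ) + 2) =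
          ∑ j : Fin p, (1 / Real.log (((j : ℕ) : ℝ) + 2)) *
            ∑ i : Fin m, I i * v i (r j)) ∧
    (∀ r : Equiv.Perm (Fin p),
        ∑ i : Fin m, I i * ∑ j : Fin p, v i (r j) / Real.log (((j : ℕ) : ℝ) + 2) ≤
          ∑ i : Fin m, I i * ∑ j : Fin p, v i (rstar j) / Real.log (((j : ℕ) : ℝ) + 2)) := by
  refine ⟨fun i => (hI i).symm ▸ inv_pos.2 (dcg_pos (hv i) (hposc i) (rk i)), fun r => ?_,
    fun r => ?_⟩
  · exact (sum_mul_dcg I r v).trans (dcg_eq_sum_mul r _)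
  · change ∑ i, I i * dcg r (v i) ≤ ∑ i, I i * dcg rstar (v i)
    rw [sum_mul_dcg, sum_mul_dcg]
    exact dcg_le_dcg_of_antitone (w := fun k => ∑ i, I i * v i k) hrstar r

/-- nDCG centroid computation.
For nonnegative vectors `v^1,…,v^m ∈ ℝ₊^p`, each with a strictly positive
coordinate, let `I(v^i) = (DCG(rank(v^i), v^i))⁻¹ > 0` and
`nDCG(r,v^i) = I(v^i)·DCG(r,v^i)`.  Then for every permutation `r`,
`∑_i nDCG(r,v^i) = ∑_j (1/log(1+j)) · (∑_i I(v^i)·v^i)_{r_j}`, and the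
permutation `rstar = rank(∑_i I(v^i)·v^i)` maximizes `∑_i nDCG(·,v^i)`.
(Positions are 0-indexed so the discount at `j : Fin p` is `1/log(j+2)`.) -/
theorem stmt_9 {m p : ℕ} (v : Fin m → Fin p → ℝ)
    (hv : ∀ i j, 0 ≤ v i j) (hposc : ∀ i : Fin m, ∃ j : Fin p, 0 < v i j)
    (rk : Fin m → Equiv.Perm (Fin p))
    (hrk : ∀ (i : Fin m) (a b : Fin p), a ≤ b → v i (rk i b) ≤ v i (rk i a))
    (I : Fin m → ℝ)
    (hI : ∀ i : Fin m,
      I i = (∑ j : Fin p, v i (rk i j) / Real.log (((j : ℕ) : ℝ) + 2))⁻¹)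
    (rstar : Equiv.Perm (Fin p))
    (hrstar : ∀ a b : Fin p, a ≤ b →
      (∑ i : Fin m, I i * v i (rstar b)) ≤ ∑ i : Fin m, I i * v i (rstar a)) :
    (∀ i : Fin m, 0 < I i) ∧
    (∀ r : Equiv.Perm (Fin p),
        ∑ i : Fin m, I i * ∑ j : Fin p, v i (r j) / Real.log (((j : ℕ) : ℝ) + 2) =
          ∑ j : Fin p, (1 / Real.log (((j : ℕ) : ℝ) + 2)) *
            ∑ i : Fin m, I i * v i (r j)) ∧
    (∀ r : Equiv.Perm (Fin p),
        ∑ i : Fin m, I i * ∑ j : Fin p, v i (r j) / Real.log (((j : ℕ) : ℝ) + 2) ≤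
          ∑ i : Fin m, I i * ∑ j : Fin p, v i (rstar j) / Real.log (((j : ℕ) : ℝ) + 2)) :=
  stmt_9_general v hv hposc rk I hI rstar hrstar
end

section
/- Let X = [x^1,…,x^n] ∈ ℝ^{d×n}, let 𝓕 = {F_1,…,F_K} be a K-partition of [d] with d_k := |F_k|, and for each k let P_k ∈ ℝ^{d_k×n} be the submatrix of rows of X indexed by F_k. Let w ∈ ℝ^d and w̃ ∈ ℝ^K, and suppose that for each k ∈ [K] there is ε_k ≥ 0 with ‖P_k^⊤(w_{F_k} − w̃_k·1_{d_k})‖_2 ≤ ε_k. Then Σ_{i=1}^n ( w^⊤x^i − w̃^⊤x̃^i )² ≤ ( Σ_{k=1}^K ε_k )². -/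
open Finset

/-!
Cluster by cluster, `w^⊤x^i - w̃^⊤x̃^i = ∑_k (P_k^⊤(w_{F_k} - w̃_k 1_{d_k}))_i`, so the residual
vector over the samples is the sum of the `K` vectors `P_k^⊤(w_{F_k} - w̃_k 1_{d_k})`.
The triangle inequality in `ℓ²` bounds its norm by `∑_k ε_k`.
-/

theorem Finset.sum_univ_eq_sum_sum_of_partition {α ι M : Type*} [Fintype α] [Fintype ι]
    [AddCommMonoid M] (F : ι → Finset α) (hdisj : ∀ k l, k ≠ l → Disjoint (F k) (F l))
    (hcover : ∀ j, ∃ k, j ∈ F k) (g : α → M) :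
    ∑ j, g j = ∑ k, ∑ j ∈ F k, g j := by
  classical
  have huniv : (univ : Finset α) = univ.biUnion F := by
    ext j
    simpa using hcover j
  rw [huniv, sum_biUnion fun k _ l _ hkl => hdisj k l hkl]

theorem sum_mul_sub_sum_mul_agglomerate {α ι R : Type*} [Fintype α] [Fintype ι] [CommRing R]
    (F : ι → Finset α) (hdisj : ∀ k l, k ≠ l → Disjoint (F k) (F l))
    (hcover : ∀ j, ∃ k, j ∈ F k) (w : α → R) (wt : ι → R) (x : α → R) :
    ∑ j, w j * x j - ∑ k, wt k * ∑ j ∈ F k, x j = ∑ k, ∑ j ∈ F k, (w j - wt k) * x j := by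
  simp only [sum_univ_eq_sum_sum_of_partition F hdisj hcover, sub_mul, sum_sub_distrib, mul_sum]

theorem sum_sq_sum_le_sq_sum_sqrt {ι κ : Type*} [Fintype κ] (s : Finset ι) (v : ι → κ → ℝ) :
    ∑ i, (∑ k ∈ s, v k i) ^ 2 ≤ (∑ k ∈ s, √(∑ i, v k i ^ 2)) ^ 2 := by
  let u : ι → EuclideanSpace ℝ κ := fun k => WithLp.toLp 2 (v k)
  have hsum : ‖∑ k ∈ s, u k‖ ^ 2 = ∑ i, (∑ k ∈ s, v k i) ^ 2 := by
    simp [u, EuclideanSpace.norm_sq_eq, WithLp.ofLp_sum]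
  have hnorm : ∀ k, ‖u k‖ = √(∑ i, v k i ^ 2) := by
    simp [u, EuclideanSpace.norm_eq]
  rw [← hsum, ← sum_congr rfl fun k _ => hnorm k]
  exact pow_le_pow_left₀ (norm_nonneg _) (norm_sum_le _ _) 2

theorem stmt_11_general {d n K : ℕ}
    (X : Matrix (Fin d) (Fin n) ℝ)
    (F : Fin K → Finset (Fin d))
    (hdisj : ∀ k l : Fin K, k ≠ l → Disjoint (F k) (F l))
    (hcover : ∀ j : Fin d, ∃ k : Fin K, j ∈ F k)
    (w : Fin d → ℝ) (wt : Fin K → ℝ)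
    (ε : Fin K → ℝ)
    (hbound : ∀ k : Fin K,
      Real.sqrt (∑ i : Fin n, (∑ j ∈ F k, (w j - wt k) * X j i) ^ 2) ≤ ε k) :
    ∑ i : Fin n,
        ((∑ j : Fin d, w j * X j i) - ∑ k : Fin K, wt k * ∑ j ∈ F k, X j i) ^ 2 ≤
      (∑ k : Fin K, ε k) ^ 2 := by
  simp only [sum_mul_sub_sum_mul_agglomerate F hdisj hcover w wt]
  calc _ ≤ (∑ k, √(∑ i, (∑ j ∈ F k, (w j - wt k) * X j i) ^ 2)) ^ 2 :=
        sum_sq_sum_le_sq_sum_sqrt univ fun k i => ∑ j ∈ F k, (w j - wt k) * X j i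
    _ ≤ (∑ k, ε k) ^ 2 :=
        pow_le_pow_left₀ (sum_nonneg fun _ _ => Real.sqrt_nonneg _)
          (sum_le_sum fun k _ => hbound k) 2

/-- If for each cluster `F_k` of a `K`-partition of `[d]`
we have `‖P_k^⊤(w_{F_k} - wt_k·1_{d_k})‖₂ ≤ ε_k` with `ε_k ≥ 0`, then
`∑_{i=1}^n (w^⊤x^i - wt^⊤x̃^i)² ≤ (∑_k ε_k)²`. -/
theorem stmt_11 {d n K : ℕ}
    (X : Matrix (Fin d) (Fin n) ℝ)
    (F : Fin K → Finset (Fin d))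
    (hdisj : ∀ k l : Fin K, k ≠ l → Disjoint (F k) (F l))
    (hcover : ∀ j : Fin d, ∃ k : Fin K, j ∈ F k)
    (w : Fin d → ℝ) (wt : Fin K → ℝ)
    (ε : Fin K → ℝ) (hε : ∀ k, 0 ≤ ε k)
    (hbound : ∀ k : Fin K,
      Real.sqrt (∑ i : Fin n, (∑ j ∈ F k, (w j - wt k) * X j i) ^ 2) ≤ ε k) :
    ∑ i : Fin n,
        ((∑ j : Fin d, w j * X j i) - ∑ k : Fin K, wt k * ∑ j ∈ F k, X j i) ^ 2 ≤
      (∑ k : Fin K, ε k) ^ 2 :=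
  stmt_11_general X F hdisj hcover w wt ε hbound
end

section
/- Let X = [x^1,…,x^n] ∈ ℝ^{d×n} and Y = [y^1,…,y^n] ∈ {0,1}^{L×n}; for l ∈ [L] let z^l := Σ_{i=1}^n y^i_l x^i ∈ ℝ^d and z̃^l := Σ_{i=1}^n y^i_l x̃^i ∈ ℝ^K. Let 𝓕 = {F_1,…,F_K} be a K-partition of [d], for each k let Q_k ∈ ℝ^{d_k×L} be the matrix whose rows are q^j := Σ_{i=1}^n x^i_j y^i for j ∈ F_k. Let δ ∈ ℝ^d and δ̃ ∈ ℝ^K, and suppose for each k there is ε_k ≥ 0 with ‖Q_k^⊤(δ_{F_k} − δ̃_k·1_{d_k})‖_2 ≤ ε_k. Then Σ_{l=1}^L ( δ^⊤z^l − δ̃^⊤z̃^l )² ≤ ( Σ_{k=1}^K ε_k )². -/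
/-!
Splitting the sum over features along the partition, the residual `δᵀzˡ - δ̃ᵀz̃ˡ` is the sum
over `k` of the `l`-th coordinates of the vectors `Q_kᵀ(δ_{F_k} - δ̃_k 1)`. The claim is thus
the triangle (Minkowski) inequality in `ℝ^L` for these `K` vectors, squared.
-/

open Finset Function

lemma Finset.sum_eq_sum_sum_of_partition {ι κ M : Type*} [Fintype ι] [Fintype κ] [DecidableEq ι]
    [AddCommMonoid M] (F : κ → Finset ι) (hdisj : Pairwise (Disjoint on F))
    (hcover : ∀ j, ∃ k, j ∈ F k) (f : ι → M) :
    ∑ j, f j = ∑ k, ∑ j ∈ F k, f j := by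
  rw [← sum_biUnion fun k _ l _ hkl => hdisj hkl]
  congr
  ext j
  simpa using hcover j

lemma sum_sq_sum_le_sq_sum_of_sqrt_le {ι κ : Type*} [Fintype ι] (s : Finset κ)
    (v : κ → ι → ℝ) (ε : κ → ℝ) (hv : ∀ k ∈ s, √(∑ l, v k l ^ 2) ≤ ε k) :
    ∑ l, (∑ k ∈ s, v k l) ^ 2 ≤ (∑ k ∈ s, ε k) ^ 2 := by
  let w : κ → EuclideanSpace ℝ ι := fun k => WithLp.toLp 2 (v k)
  have hnorm : ∀ k, ‖w k‖ = √(∑ l, v k l ^ 2) := fun k => by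
    rw [← Real.sqrt_sq (norm_nonneg _), EuclideanSpace.real_norm_sq_eq]
  have hsum : ∑ l, (∑ k ∈ s, v k l) ^ 2 = ‖∑ k ∈ s, w k‖ ^ 2 := by
    rw [EuclideanSpace.real_norm_sq_eq]
    simp [w, WithLp.ofLp_sum]
  have htri : ‖∑ k ∈ s, w k‖ ≤ ∑ k ∈ s, ε k :=
    (norm_sum_le _ _).trans (sum_le_sum fun k hk => (hnorm k).le.trans (hv k hk))
  rw [hsum]
  exact pow_le_pow_left₀ (norm_nonneg _) htri 2

lemma sum_mul_sub_sum_mul_agglomerate_eq {ι κ ν R : Type*} [Fintype ι] [Fintype κ]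
    [Fintype ν] [DecidableEq ι] [CommRing R] (X : ι → ν → R) (y : ν → R) (F : κ → Finset ι)
    (hdisj : Pairwise (Disjoint on F)) (hcover : ∀ j, ∃ k, j ∈ F k)
    (δ : ι → R) (δt : κ → R) :
    (∑ j, δ j * ∑ i, y i * X j i) - ∑ k, δt k * ∑ i, y i * ∑ j ∈ F k, X j i =
      ∑ k, ∑ j ∈ F k, (δ j - δt k) * ∑ i, X j i * y i := by
  rw [sum_eq_sum_sum_of_partition F hdisj hcover, ← sum_sub_distrib]
  refine sum_congr rfl fun k _ => ?_
  have hswap : ∑ i, y i * ∑ j ∈ F k, X j i = ∑ j ∈ F k, ∑ i, X j i * y i := by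
    simp_rw [mul_sum, mul_comm (y _)]
    exact sum_comm
  simp_rw [hswap, mul_sum, sub_mul, sum_sub_distrib, mul_comm (y _)]

theorem stmt_13_general {d n L K : ℕ}
    (X : Matrix (Fin d) (Fin n) ℝ)
    (Y : Matrix (Fin L) (Fin n) ℝ)
    (F : Fin K → Finset (Fin d))
    (hdisj : ∀ k l : Fin K, k ≠ l → Disjoint (F k) (F l))
    (hcover : ∀ j : Fin d, ∃ k : Fin K, j ∈ F k)
    (δ : Fin d → ℝ) (δt : Fin K → ℝ)
    (ε : Fin K → ℝ)
    (hbound : ∀ k : Fin K,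
      Real.sqrt (∑ l : Fin L,
        (∑ j ∈ F k, (δ j - δt k) * (∑ i : Fin n, X j i * Y l i)) ^ 2) ≤ ε k) :
    ∑ l : Fin L,
        ((∑ j : Fin d, δ j * (∑ i : Fin n, Y l i * X j i)) -
          ∑ k : Fin K, δt k * (∑ i : Fin n, Y l i * ∑ j ∈ F k, X j i)) ^ 2 ≤
      (∑ k : Fin K, ε k) ^ 2 := by
  simp_rw [sum_mul_sub_sum_mul_agglomerate_eq X _ F (fun k l => hdisj k l) hcover δ δt]
  exact sum_sq_sum_le_sq_sum_of_sqrt_le univ _ ε fun k _ => hbound k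

/-- With `z^l = ∑_i y^i_l x^i ∈ ℝ^d`,
`z̃^l = ∑_i y^i_l x̃^i ∈ ℝ^K`, and `Q_k` the matrix with rows
`q^j = ∑_i x^i_j y^i` for `j ∈ F_k`: if for each `k` we have
`‖Q_k^⊤(δ_{F_k} - δt_k·1_{d_k})‖₂ ≤ ε_k` with `ε_k ≥ 0`, then
`∑_{l=1}^L (δ^⊤z^l - δt^⊤z̃^l)² ≤ (∑_k ε_k)²`. -/
theorem stmt_13 {d n L K : ℕ}
    (X : Matrix (Fin d) (Fin n) ℝ)
    (Y : Matrix (Fin L) (Fin n) ℝ)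
    (hY : ∀ (l : Fin L) (i : Fin n), Y l i = 0 ∨ Y l i = 1)
    (F : Fin K → Finset (Fin d))
    (hdisj : ∀ k l : Fin K, k ≠ l → Disjoint (F k) (F l))
    (hcover : ∀ j : Fin d, ∃ k : Fin K, j ∈ F k)
    (δ : Fin d → ℝ) (δt : Fin K → ℝ)
    (ε : Fin K → ℝ) (hε : ∀ k, 0 ≤ ε k)
    (hbound : ∀ k : Fin K,
      Real.sqrt (∑ l : Fin L,
        (∑ j ∈ F k, (δ j - δt k) * (∑ i : Fin n, X j i * Y l i)) ^ 2) ≤ ε k) :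
    ∑ l : Fin L,
        ((∑ j : Fin d, δ j * (∑ i : Fin n, Y l i * X j i)) -
          ∑ k : Fin K, δt k * (∑ i : Fin n, Y l i * ∑ j ∈ F k, X j i)) ^ 2 ≤
      (∑ k : Fin K, ε k) ^ 2 :=
  stmt_13_general X Y F hdisj hcover δ δt ε hbound
end

section
/- Let X = [x^1,…,x^n] ∈ ℝ^{d×n}, let 𝓕 = {F_1,…,F_K} be a K-partition of [d], and for each k let P_k ∈ ℝ^{d_k×n} be the submatrix of rows of X indexed by F_k and let μ^k ∈ ℝ^n. Define err_k := sqrt( Σ_{j∈F_k} ‖p^j − μ^k‖_2² ), where p^j = (x^1_j,…,x^n_j)^⊤ ∈ ℝ^n is the j-th row of X. Then err_k = ‖P_k − 1_{d_k}(μ^k)^⊤‖_F, and for every w ∈ ℝ^d there exists c ∈ ℝ such that ‖P_k^⊤(w_{F_k} − c·1_{d_k})‖_2 ≤ err_k · ‖w_{F_k}^⊥‖_2. -/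
open Finset

/-! Subtracting the block mean `c` from `w` makes the weights `w j - c` sum to zero, so
`∑ j, (w j - c) p^j = ∑ j, (w j - c) (p^j - μ)` for any `μ`; Cauchy–Schwarz in `j`, applied
coordinatewise and summed, then bounds the squared norm by `‖w - c‖² · ∑ j, ‖p^j - μ‖²`. -/

lemma Finset.sum_sub_sum_div_card_eq_zero {ι : Type*} (s : Finset ι) (w : ι → ℝ) :
    ∑ j ∈ s, (w j - (∑ j' ∈ s, w j') / (#s : ℝ)) = 0 := by
  rcases s.eq_empty_or_nonempty with rfl | hs
  · simp
  · have hcard : (#s : ℝ) ≠ 0 := by exact_mod_cast hs.card_pos.ne'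
    rw [sum_sub_distrib, sum_const, nsmul_eq_mul, mul_div_cancel₀ _ hcard, sub_self]

lemma Finset.sum_mul_eq_sum_mul_sub_of_sum_eq_zero {ι : Type*} {s : Finset ι} {v : ι → ℝ}
    (hv : ∑ j ∈ s, v j = 0) (x : ι → ℝ) (m : ℝ) :
    ∑ j ∈ s, v j * x j = ∑ j ∈ s, v j * (x j - m) := by
  simp only [mul_sub, sum_sub_distrib, ← sum_mul, hv, zero_mul, sub_zero]

lemma Finset.sum_sq_sum_mul_le_of_sum_eq_zero {ι κ : Type*} [Fintype κ] {s : Finset ι}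
    {v : ι → ℝ} (hv : ∑ j ∈ s, v j = 0) (X : ι → κ → ℝ) (μ : κ → ℝ) :
    ∑ i, (∑ j ∈ s, v j * X j i) ^ 2 ≤
      (∑ j ∈ s, v j ^ 2) * ∑ j ∈ s, ∑ i, (X j i - μ i) ^ 2 := by
  calc ∑ i, (∑ j ∈ s, v j * X j i) ^ 2
      = ∑ i, (∑ j ∈ s, v j * (X j i - μ i)) ^ 2 := by
        refine sum_congr rfl fun i _ => ?_
        rw [sum_mul_eq_sum_mul_sub_of_sum_eq_zero hv (X · i) (μ i)]
    _ ≤ ∑ i, (∑ j ∈ s, v j ^ 2) * ∑ j ∈ s, (X j i - μ i) ^ 2 :=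
        sum_le_sum fun i _ => sum_mul_sq_le_sq_mul_sq s _ _
    _ = (∑ j ∈ s, v j ^ 2) * ∑ j ∈ s, ∑ i, (X j i - μ i) ^ 2 := by
        rw [← mul_sum, sum_comm]

theorem stmt_14_general {d n K : ℕ}
    (X : Matrix (Fin d) (Fin n) ℝ)
    (F : Fin K → Finset (Fin d))
    (μ : Fin K → Fin n → ℝ) (k : Fin K)
    (errk : ℝ)
    (herr : errk =
      Real.sqrt (∑ j ∈ F k, Real.sqrt (∑ i : Fin n, (X j i - μ k i) ^ 2) ^ 2)) :
    errk = Real.sqrt (∑ j ∈ F k, ∑ i : Fin n, (X j i - μ k i) ^ 2) ∧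
      ∀ w : Fin d → ℝ, ∃ c : ℝ,
        Real.sqrt (∑ i : Fin n, (∑ j ∈ F k, (w j - c) * X j i) ^ 2) ≤
          errk *
            Real.sqrt (∑ j ∈ F k,
              (w j - (∑ j' ∈ F k, w j') / ((F k).card : ℝ)) ^ 2) := by
  have herr' : errk = Real.sqrt (∑ j ∈ F k, ∑ i : Fin n, (X j i - μ k i) ^ 2) := by
    simp only [herr, Real.sq_sqrt (sum_nonneg fun _ _ => sq_nonneg _)]
  refine ⟨herr', fun w => ⟨(∑ j' ∈ F k, w j') / (#(F k) : ℝ), ?_⟩⟩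
  rw [herr', ← Real.sqrt_mul (sum_nonneg fun _ _ => sum_nonneg fun _ _ => sq_nonneg _), mul_comm]
  exact Real.sqrt_le_sqrt
    (sum_sq_sum_mul_le_of_sum_eq_zero (sum_sub_sum_div_card_eq_zero _ w) X (μ k))

/-- With `p^j` the `j`-th row of `X` and
`err_k = sqrt(∑_{j∈F_k} ‖p^j - μ^k‖₂²)`, we have
`err_k = ‖P_k - 1_{d_k}(μ^k)^⊤‖_F`, and for every `w ∈ ℝ^d` there exists
`c ∈ ℝ` with `‖P_k^⊤(w_{F_k} - c·1_{d_k})‖₂ ≤ err_k · ‖w_{F_k}^⊥‖₂`. -/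
theorem stmt_14 {d n K : ℕ}
    (X : Matrix (Fin d) (Fin n) ℝ)
    (F : Fin K → Finset (Fin d))
    (hdisj : ∀ k l : Fin K, k ≠ l → Disjoint (F k) (F l))
    (hcover : ∀ j : Fin d, ∃ k : Fin K, j ∈ F k)
    (μ : Fin K → Fin n → ℝ) (k : Fin K)
    (errk : ℝ)
    (herr : errk =
      Real.sqrt (∑ j ∈ F k, Real.sqrt (∑ i : Fin n, (X j i - μ k i) ^ 2) ^ 2)) :
    errk = Real.sqrt (∑ j ∈ F k, ∑ i : Fin n, (X j i - μ k i) ^ 2) ∧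
      ∀ w : Fin d → ℝ, ∃ c : ℝ,
        Real.sqrt (∑ i : Fin n, (∑ j ∈ F k, (w j - c) * X j i) ^ 2) ≤
          errk *
            Real.sqrt (∑ j ∈ F k,
              (w j - (∑ j' ∈ F k, w j') / ((F k).card : ℝ)) ^ 2) :=
  stmt_14_general X F μ k errk herr
end
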